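/- arXiv:1811.05969 — 5 statements merged into one kernel-verified Lean document; each statement's English description precedes it below -/
import Mathlib

section
/- Let (g, J, ω) be a Lie algebra with an endomorphism J satisfying J² = -id and ω a closed alternating 2-form with ω(JX,Y) = ω(X,JY). Let a be a J-invariant ω-isotropic ideal. Then a^⊥ is J-invariant, and J induces a well-defined endomorphism J̄ on the quotient Lie algebra a^⊥/a with J̄² = -id, and ω induces a well-defined alternating form ω̄ on a^⊥/a with ω̄(J̄X, Y) = ω̄(X, J̄Y). -/
/-!
`J` preserves `a^⊥` because it is `ω`-symmetric and preserves `a`. The form descends because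
`ω x y - ω x' y'` splits into pairings of `a^⊥` with `a` and of `a` with `a`, all of which
vanish; pairing `a` on the left with `a^⊥` needs `ω` to be alternating, hence skew.
-/

namespace LinearMap

variable {R M : Type*} [CommRing R] [AddCommGroup M] [Module R M]
  {ω : M →ₗ[R] M →ₗ[R] R} {p : Submodule R M}

theorem apply_map_eq_zero_of_forall_apply_eq_zero {J : M →ₗ[R] M}
    (hsym : ∀ x y, ω (J x) y = ω x (J y)) (hp : ∀ z ∈ p, J z ∈ p) {x : M}
    (hx : ∀ z ∈ p, ω x z = 0) : ∀ z ∈ p, ω (J x) z = 0 :=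
  fun z hz => (hsym x z).trans (hx _ (hp z hz))

theorem IsAlt.apply_eq_apply_of_sub_mem (hω : ω.IsAlt) (hiso : ∀ x ∈ p, ∀ y ∈ p, ω x y = 0)
    {x x' y y' : M} (hx : ∀ z ∈ p, ω x z = 0) (hy : ∀ z ∈ p, ω y z = 0)
    (hxx' : x - x' ∈ p) (hyy' : y - y' ∈ p) : ω x y = ω x' y' := by
  have h₁ : ω x (y - y') = 0 := hx _ hyy'
  have h₂ : ω (x - x') y = 0 := by rw [← hω.neg, hy _ hxx', neg_zero]
  have h₃ : ω (x - x') (y - y') = 0 := hiso _ hxx' _ hyy'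
  simp only [map_sub, sub_apply] at h₁ h₂ h₃
  linear_combination h₁ + h₂ - h₃

end LinearMap

theorem stmt_5_general (g : Type*) [LieRing g] [LieAlgebra ℝ g]
    (J : g →ₗ[ℝ] g) (hJ : ∀ x, J (J x) = -x)
    (ω : g →ₗ[ℝ] g →ₗ[ℝ] ℝ) (halt : ∀ x, ω x x = 0)
    (hsym : ∀ x y, ω (J x) y = ω x (J y))
    (a : LieIdeal ℝ g) (haJ : ∀ x ∈ a, J x ∈ a)
    (hiso : ∀ x ∈ a, ∀ y ∈ a, ω x y = 0) :
    (∀ x : g, (∀ z ∈ a, ω x z = 0) → ∀ z ∈ a, ω (J x) z = 0) ∧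
    (∀ x y : g, x - y ∈ a → J x - J y ∈ a) ∧
    (∀ x : g, J (J x) + x ∈ a) ∧
    (∀ x x' y y' : g, (∀ z ∈ a, ω x z = 0) → (∀ z ∈ a, ω y z = 0) →
      x - x' ∈ a → y - y' ∈ a → ω x y = ω x' y') ∧
    (∀ x y : g, (∀ z ∈ a, ω x z = 0) → (∀ z ∈ a, ω y z = 0) →
      ω (J x) y = ω x (J y)) := by
  refine ⟨fun x => LinearMap.apply_map_eq_zero_of_forall_apply_eq_zero (p := a.toSubmodule)
      hsym haJ, fun x y hxy => map_sub J x y ▸ haJ _ hxy, fun x => ?_,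
    fun x x' y y' => LinearMap.IsAlt.apply_eq_apply_of_sub_mem (p := a.toSubmodule) halt hiso,
    fun x y _ _ => hsym x y⟩
  rw [hJ, neg_add_cancel]
  exact zero_mem a

/-- complex symplectic reduction.  For a `J`-invariant `ω`-isotropic ideal
`a` of a Lie algebra with `J² = -id`, `ω` closed alternating and `J` symmetric w.r.t.
`ω`:  (1) `a^⊥` is `J`-invariant;  (2) `J` descends to the quotient `a^⊥/a`;
(3) the induced map squares to `-id`;  (4) `ω` descends to a well-defined form on
`a^⊥/a`;  (5) the induced complex structure is symmetric w.r.t. the induced form. -/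
theorem stmt_5 (g : Type*) [LieRing g] [LieAlgebra ℝ g]
    (J : g →ₗ[ℝ] g) (hJ : ∀ x, J (J x) = -x)
    (ω : g →ₗ[ℝ] g →ₗ[ℝ] ℝ) (halt : ∀ x, ω x x = 0)
    (hclosed : ∀ x y z : g, ω ⁅x, y⁆ z + ω ⁅y, z⁆ x + ω ⁅z, x⁆ y = 0)
    (hsym : ∀ x y, ω (J x) y = ω x (J y))
    (a : LieIdeal ℝ g) (haJ : ∀ x ∈ a, J x ∈ a)
    (hiso : ∀ x ∈ a, ∀ y ∈ a, ω x y = 0) :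
    (∀ x : g, (∀ z ∈ a, ω x z = 0) → ∀ z ∈ a, ω (J x) z = 0) ∧
    (∀ x y : g, x - y ∈ a → J x - J y ∈ a) ∧
    (∀ x : g, J (J x) + x ∈ a) ∧
    (∀ x x' y y' : g, (∀ z ∈ a, ω x z = 0) → (∀ z ∈ a, ω y z = 0) →
      x - x' ∈ a → y - y' ∈ a → ω x y = ω x' y') ∧
    (∀ x y : g, (∀ z ∈ a, ω x z = 0) → (∀ z ∈ a, ω y z = 0) →
      ω (J x) y = ω x (J y)) :=
  stmt_5_general g J hJ ω halt hsym a haJ hiso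
end

section
/- Let g be the 4-dimensional Lie algebra h₃ ⊕ ℝ with basis e₁,...,e₄ and only nonzero bracket [e₁,e₂] = e₃, equipped with J₀ sending e₁ ↦ -e₂, e₂ ↦ e₁, e₃ ↦ -e₄, e₄ ↦ e₃ (dually J₀* = e²⊗e₁ - e¹⊗e₂ + e⁴⊗e₃ - e³⊗e₄) and ω₀ = e¹∧e⁴ + e²∧e³. Then J₀ is an integrable complex structure (Nijenhuis tensor vanishes), ω₀ is a closed non-degenerate 2-form, and J₀ is symmetric with respect to ω₀: ω₀(J₀X, Y) = ω₀(X, J₀Y) for all X, Y. -/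
/-!
In the coordinates `xᵢ = b.repr x i`, an alternating bilinear map on a free module of rank 4 is
determined by its values on the six pairs `(b i, b j)`, `i < j`; hence
`⁅x, y⁆ = (x₀y₁ - x₁y₀) • b 2` and `ω x y = x₀y₃ - x₃y₀ + x₁y₂ - x₂y₁`, while `J x` has
coordinates `(x₁, -x₀, x₃, -x₂)`. Each claim is then a polynomial identity in the coordinates.
The bracket is the determinant of the components in the plane of `b 0, b 1`, which `J` preserves
with determinant `1` and trace `0`; so `⁅J x, J y⁆ = ⁅x, y⁆` and `⁅J x, y⁆ + ⁅x, J y⁆ = 0`, and the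
Nijenhuis tensor vanishes. Since `ω (b 2) z = -z₁`, the cyclic sum in `dω` is a determinant with
two equal columns.
-/

open Module

namespace LinearMap.IsAlt

variable {R M P : Type*} [CommRing R] [AddCommGroup M] [Module R M] [AddCommGroup P] [Module R P]
  {B : M →ₗ[R] M →ₗ[R] P}

theorem apply_eq_of_basis_fin_four (hB : B.IsAlt) (b : Basis (Fin 4) R M) (x y : M) :
    B x y = (b.repr x 0 * b.repr y 1 - b.repr x 1 * b.repr y 0) • B (b 0) (b 1)
      + (b.repr x 0 * b.repr y 2 - b.repr x 2 * b.repr y 0) • B (b 0) (b 2)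
      + (b.repr x 0 * b.repr y 3 - b.repr x 3 * b.repr y 0) • B (b 0) (b 3)
      + (b.repr x 1 * b.repr y 2 - b.repr x 2 * b.repr y 1) • B (b 1) (b 2)
      + (b.repr x 1 * b.repr y 3 - b.repr x 3 * b.repr y 1) • B (b 1) (b 3)
      + (b.repr x 2 * b.repr y 3 - b.repr x 3 * b.repr y 2) • B (b 2) (b 3) := by
  conv_lhs => rw [← b.sum_repr x, ← b.sum_repr y]
  simp only [Fin.sum_univ_four, map_add, map_smul, add_apply, smul_apply, hB.self_eq_zero,
    ← hB.neg (b 0) (b 1), ← hB.neg (b 0) (b 2), ← hB.neg (b 0) (b 3), ← hB.neg (b 1) (b 2),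
    ← hB.neg (b 1) (b 3), ← hB.neg (b 2) (b 3)]
  module

end LinearMap.IsAlt

section Coordinates

variable {R L : Type*} [CommRing R] [LieRing L] [LieAlgebra R L] (b : Basis (Fin 4) R L)

theorem lie_eq_smul_of_basis (h01 : ⁅b 0, b 1⁆ = b 2) (h02 : ⁅b 0, b 2⁆ = 0)
    (h03 : ⁅b 0, b 3⁆ = 0) (h12 : ⁅b 1, b 2⁆ = 0) (h13 : ⁅b 1, b 3⁆ = 0)
    (h23 : ⁅b 2, b 3⁆ = 0) (x y : L) :
    ⁅x, y⁆ = (b.repr x 0 * b.repr y 1 - b.repr x 1 * b.repr y 0) • b 2 := by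
  have hlie : (LieModule.toEnd R L L : L →ₗ[R] L →ₗ[R] L).IsAlt := lie_self
  simpa [h01, h02, h03, h12, h13, h23] using hlie.apply_eq_of_basis_fin_four b x y

theorem form_apply_eq_of_basis {ω : L →ₗ[R] L →ₗ[R] R} (hω : ω.IsAlt)
    (hω01 : ω (b 0) (b 1) = 0) (hω02 : ω (b 0) (b 2) = 0)
    (hω03 : ω (b 0) (b 3) = 1) (hω12 : ω (b 1) (b 2) = 1)
    (hω13 : ω (b 1) (b 3) = 0) (hω23 : ω (b 2) (b 3) = 0) (x y : L) :
    ω x y = b.repr x 0 * b.repr y 3 - b.repr x 3 * b.repr y 0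
      + (b.repr x 1 * b.repr y 2 - b.repr x 2 * b.repr y 1) := by
  simpa [hω01, hω02, hω03, hω12, hω13, hω23] using hω.apply_eq_of_basis_fin_four b x y

theorem repr_apply_eq_of_basis {J : L →ₗ[R] L}
    (hJ0 : J (b 0) = -b 1) (hJ1 : J (b 1) = b 0) (hJ2 : J (b 2) = -b 3) (hJ3 : J (b 3) = b 2)
    (x : L) : ⇑(b.repr (J x)) = ![b.repr x 1, -b.repr x 0, b.repr x 3, -b.repr x 2] := by
  have hJx : J x = b.repr x 1 • b 0 - b.repr x 0 • b 1 + b.repr x 3 • b 2 - b.repr x 2 • b 3 := by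
    conv_lhs => rw [← b.sum_repr x]
    simp only [Fin.sum_univ_four, map_add, map_smul, hJ0, hJ1, hJ2, hJ3]
    module
  ext i
  fin_cases i <;> simp [hJx]

variable {b} {J : L →ₗ[R] L} {ω : L →ₗ[R] L →ₗ[R] R}

theorem apply_apply_eq_neg_of_repr
    (hJ : ∀ x, ⇑(b.repr (J x)) = ![b.repr x 1, -b.repr x 0, b.repr x 3, -b.repr x 2])
    (x : L) : J (J x) = -x :=
  b.ext_elem fun i => by fin_cases i <;> simp [hJ]

theorem nijenhuis_eq_zero_of_repr
    (hlie : ∀ x y : L, ⁅x, y⁆ = (b.repr x 0 * b.repr y 1 - b.repr x 1 * b.repr y 0) • b 2)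
    (hJ : ∀ x, ⇑(b.repr (J x)) = ![b.repr x 1, -b.repr x 0, b.repr x 3, -b.repr x 2])
    (x y : L) : ⁅x, y⁆ + J (⁅J x, y⁆ + ⁅x, J y⁆) - ⁅J x, J y⁆ = 0 := by
  have hJ2 : J (b 2) = -b 3 := b.ext_elem fun i => by fin_cases i <;> simp [hJ]
  simp [hlie, hJ, hJ2]
  module

theorem form_lie_cyclic_sum_eq_zero_of_repr
    (hlie : ∀ x y : L, ⁅x, y⁆ = (b.repr x 0 * b.repr y 1 - b.repr x 1 * b.repr y 0) • b 2)
    (hω : ∀ x y, ω x y = b.repr x 0 * b.repr y 3 - b.repr x 3 * b.repr y 0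
      + (b.repr x 1 * b.repr y 2 - b.repr x 2 * b.repr y 1))
    (x y z : L) : ω ⁅x, y⁆ z + ω ⁅y, z⁆ x + ω ⁅z, x⁆ y = 0 := by
  simp [hlie, hω]
  ring

theorem separatingLeft_of_repr
    (hω : ∀ x y, ω x y = b.repr x 0 * b.repr y 3 - b.repr x 3 * b.repr y 0
      + (b.repr x 1 * b.repr y 2 - b.repr x 2 * b.repr y 1)) :
    ω.SeparatingLeft := by
  intro x hx
  have h0 := hx (b 3)
  have h1 := hx (b 2)
  have h2 := hx (b 1)
  have h3 := hx (b 0)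
  simp [hω] at h0 h1 h2 h3
  exact b.ext_elem fun i => by fin_cases i <;> simp [h0, h1, h2, h3]

theorem form_apply_left_eq_apply_right_of_repr
    (hJ : ∀ x, ⇑(b.repr (J x)) = ![b.repr x 1, -b.repr x 0, b.repr x 3, -b.repr x 2])
    (hω : ∀ x y, ω x y = b.repr x 0 * b.repr y 3 - b.repr x 3 * b.repr y 0
      + (b.repr x 1 * b.repr y 2 - b.repr x 2 * b.repr y 1))
    (x y : L) : ω (J x) y = ω x (J y) := by
  simp [hω, hJ]
  ring

end Coordinates

/-- On `h₃ ⊕ ℝ` (basis `e₁,…,e₄`, only nonzero bracket `[e₁,e₂]=e₃`),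
the endomorphism `J₀` with `J₀e₁ = -e₂, J₀e₂ = e₁, J₀e₃ = -e₄, J₀e₄ = e₃` and the
2-form `ω₀ = e¹∧e⁴ + e²∧e³` satisfy: `J₀² = -id`, `J₀` is integrable (vanishing
Nijenhuis tensor), `ω₀` is closed and non-degenerate, and `J₀` is symmetric with
respect to `ω₀`. -/
theorem stmt_8 (L : Type*) [LieRing L] [LieAlgebra ℝ L]
    (b : Module.Basis (Fin 4) ℝ L)
    (h01 : ⁅b 0, b 1⁆ = b 2) (h02 : ⁅b 0, b 2⁆ = 0) (h03 : ⁅b 0, b 3⁆ = 0)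
    (h12 : ⁅b 1, b 2⁆ = 0) (h13 : ⁅b 1, b 3⁆ = 0) (h23 : ⁅b 2, b 3⁆ = 0)
    (J : L →ₗ[ℝ] L)
    (hJ0 : J (b 0) = -b 1) (hJ1 : J (b 1) = b 0)
    (hJ2 : J (b 2) = -b 3) (hJ3 : J (b 3) = b 2)
    (ω : L →ₗ[ℝ] L →ₗ[ℝ] ℝ) (halt : ∀ x, ω x x = 0)
    (hω01 : ω (b 0) (b 1) = 0) (hω02 : ω (b 0) (b 2) = 0)
    (hω03 : ω (b 0) (b 3) = 1) (hω12 : ω (b 1) (b 2) = 1)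
    (hω13 : ω (b 1) (b 3) = 0) (hω23 : ω (b 2) (b 3) = 0) :
    (∀ x, J (J x) = -x) ∧
    (∀ x y : L, ⁅x, y⁆ + J (⁅J x, y⁆ + ⁅x, J y⁆) - ⁅J x, J y⁆ = 0) ∧
    (∀ x y z : L, ω ⁅x, y⁆ z + ω ⁅y, z⁆ x + ω ⁅z, x⁆ y = 0) ∧
    (∀ x : L, (∀ y, ω x y = 0) → x = 0) ∧
    (∀ x y : L, ω (J x) y = ω x (J y)) := by
  have hlie := lie_eq_smul_of_basis b h01 h02 h03 h12 h13 h23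
  have hJ := repr_apply_eq_of_basis b hJ0 hJ1 hJ2 hJ3
  have hω := form_apply_eq_of_basis b halt hω01 hω02 hω03 hω12 hω13 hω23
  exact ⟨apply_apply_eq_neg_of_repr hJ, nijenhuis_eq_zero_of_repr hlie hJ,
    form_lie_cyclic_sum_eq_zero_of_repr hlie hω, separatingLeft_of_repr hω,
    form_apply_left_eq_apply_right_of_repr hJ hω⟩
end

section
/- Let z ∈ ℂ \ {0} and consider on ℝ⁴ (with basis e₁,...,e₄) the 2-form ω(z) = Re(z)(e¹∧e⁴ + e²∧e³) + Im(z)(e¹∧e³ - e²∧e⁴). For w ∈ ℂ \ {0}, let F(w) be the linear map with matrix blocks [[Re w, -Im w],[Im w, Re w]] on span{e₁,e₂} and |w|²·Id on span{e₃,e₄}. Then F(w)* ω(z) = ω(w z |w|²), i.e. pulling back ω(z) by F(w) gives ω(wz|w|²). -/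
/-- The 2-form `ω(z) = Re(z)(e¹∧e⁴ + e²∧e³) + Im(z)(e¹∧e³ - e²∧e⁴)` on `ℝ⁴`. -/
noncomputable def omegaOf (z : ℂ) (x y : Fin 4 → ℝ) : ℝ :=
  z.re * ((x 0 * y 3 - x 3 * y 0) + (x 1 * y 2 - x 2 * y 1)) +
  z.im * ((x 0 * y 2 - x 2 * y 0) - (x 1 * y 3 - x 3 * y 1))

/-- The linear automorphism `F(w)` of `ℝ⁴`: the rotation-dilation
`[[Re w, -Im w],[Im w, Re w]]` on `span{e₁,e₂}` and `|w|²·Id` on `span{e₃,e₄}`. -/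
noncomputable def FwMap (w : ℂ) (x : Fin 4 → ℝ) : Fin 4 → ℝ :=
  ![w.re * x 0 - w.im * x 1, w.im * x 0 + w.re * x 1,
    Complex.normSq w * x 2, Complex.normSq w * x 3]

/-!
Identify `ℝ⁴` with `ℂ²` via `x ↦ (x₀ + i x₁, x₂ + i x₃)`. Then `ω(z)(x, y) = Im (z · det(x, y))`,
where `det` is the complex determinant of the two vectors of `ℂ²`, and `F(w)` acts diagonally,
multiplying the first coordinate by `w` and the second by `|w|²`. Hence it multiplies the
determinant by `w |w|²`, which is absorbed into the parameter `z`.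
-/

open Complex

def toComplexPair (x : Fin 4 → ℝ) : ℂ × ℂ := (⟨x 0, x 1⟩, ⟨x 2, x 3⟩)

def complexDet (p q : ℂ × ℂ) : ℂ := p.1 * q.2 - q.1 * p.2

theorem complexDet_mul_mul (a b : ℂ) (p q : ℂ × ℂ) :
    complexDet (a * p.1, b * p.2) (a * q.1, b * q.2) = a * b * complexDet p q := by
  unfold complexDet
  ring

theorem omegaOf_eq_im_mul_complexDet (z : ℂ) (x y : Fin 4 → ℝ) :
    omegaOf z x y = (z * complexDet (toComplexPair x) (toComplexPair y)).im := by
  simp only [omegaOf, complexDet, toComplexPair, mul_im, sub_re, sub_im, mul_re]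
  ring

theorem toComplexPair_FwMap (w : ℂ) (x : Fin 4 → ℝ) :
    toComplexPair (FwMap w x) =
      (w * (toComplexPair x).1, (normSq w : ℂ) * (toComplexPair x).2) := by
  simp [toComplexPair, FwMap, Complex.ext_iff, add_comm]

theorem stmt_9_general (z w : ℂ) :
    ∀ x y : Fin 4 → ℝ,
      omegaOf z (FwMap w x) (FwMap w y) =
        omegaOf (w * z * (Complex.normSq w : ℂ)) x y := by
  intro x y
  rw [omegaOf_eq_im_mul_complexDet, omegaOf_eq_im_mul_complexDet, toComplexPair_FwMap,
    toComplexPair_FwMap, complexDet_mul_mul]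
  ring_nf

/-- `F(w)* ω(z) = ω(w z |w|²)` for all nonzero `z, w ∈ ℂ`. -/
theorem stmt_9 (z w : ℂ) (hz : z ≠ 0) (hw : w ≠ 0) :
    ∀ x y : Fin 4 → ℝ,
      omegaOf z (FwMap w x) (FwMap w y) =
        omegaOf (w * z * (Complex.normSq w : ℂ)) x y :=
  stmt_9_general z w
end

section
/- The 8-dimensional real Lie algebra h₅ ⊕ ℝ³, with basis e₁,...,e₈ and only nonzero brackets [e₁,e₂] = e₈ and [e₃,e₄] = -e₈, admits no symplectic structure: there is no closed alternating 2-form ω on it with ω⁴ ≠ 0. -/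
/-!
In `h₅ ⊕ ℝ³` the central element `e₈` is the bracket `[e₁, e₂]` of two elements that commute
with every `eᵢ` other than `e₁, e₂`, and it is `-[e₃, e₄]`, where `e₃, e₄` commute with `e₁, e₂`.
The cocycle identity then forces `ω(e₈, eᵢ) = 0` for every `i`, so `e₈` lies in the kernel
of `ω` and `ω` is degenerate.
-/

theorem LinearMap.apply_lie_eq_zero_of_cocycle {R L : Type*} [CommRing R] [LieRing L]
    [Module R L] {ω : L →ₗ[R] L →ₗ[R] R}
    (hω : ∀ x y z : L, ω ⁅x, y⁆ z + ω ⁅y, z⁆ x + ω ⁅z, x⁆ y = 0)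
    {x y z : L} (hyz : ⁅y, z⁆ = 0) (hzx : ⁅z, x⁆ = 0) : ω ⁅x, y⁆ z = 0 := by
  simpa [hyz, hzx] using hω x y z

/-- The 8-dimensional nilpotent Lie algebra `h₅ ⊕ ℝ³` (basis `e₁,…,e₈`
with only nonzero brackets `[e₁,e₂] = e₈` and `[e₃,e₄] = -e₈`) admits no symplectic
structure: there is no closed non-degenerate alternating 2-form on it. -/
theorem stmt_13 (L : Type*) [LieRing L] [LieAlgebra ℝ L]
    (b : Module.Basis (Fin 8) ℝ L)
    (h01 : ⁅b 0, b 1⁆ = b 7) (h23 : ⁅b 2, b 3⁆ = -b 7)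
    (hzero : ∀ i j : Fin 8, i < j → (i, j) ≠ (0, 1) → (i, j) ≠ (2, 3) →
      ⁅b i, b j⁆ = 0) :
    ¬ ∃ ω : L →ₗ[ℝ] L →ₗ[ℝ] ℝ, (∀ x, ω x x = 0) ∧
      (∀ x y z : L, ω ⁅x, y⁆ z + ω ⁅y, z⁆ x + ω ⁅z, x⁆ y = 0) ∧
      (∀ x : L, (∀ y, ω x y = 0) → x = 0) := by
  rintro ⟨ω, -, hω, hnondeg⟩
  have hcomm : ∀ i j : Fin 8, (i, j) ∉ [(0, 1), (1, 0), (2, 3), (3, 2)] → ⁅b i, b j⁆ = 0 := by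
    intro i j hij
    rcases lt_trichotomy i j with h | rfl | h
    · exact hzero i j h (by grind) (by grind)
    · exact lie_self _
    · rw [← lie_skew, hzero j i h (by grind) (by grind), neg_zero]
  have horth : ∀ i, ω (b 7) (b i) = 0 := by
    intro i
    by_cases hi : i = 0 ∨ i = 1
    · rw [← neg_neg (b 7), ← h23, map_neg, LinearMap.neg_apply,
        ω.apply_lie_eq_zero_of_cocycle hω (hcomm 3 i (by grind)) (hcomm i 2 (by grind)), neg_zero]
    · rw [← h01, ω.apply_lie_eq_zero_of_cocycle hω (hcomm 1 i (by grind)) (hcomm i 0 (by grind))]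
  have hker : ω (b 7) = 0 := b.ext horth
  exact b.ne_zero 7 (hnondeg _ fun y => by rw [hker, LinearMap.zero_apply])
end

section
/- Let (ḡ, J̄, ω̄) be a complex symplectic Lie algebra of dimension 4n, V a 2-dimensional real vector space with complex structure I, and g = V ⊕ ḡ ⊕ V* with the bracket determined by tensors ν, τ, f, g, β as in complex symplectic oxidation. If the bracket satisfies the Jacobi identity, then necessarily: (a) for each v ∈ V, f(v) is a derivation of ḡ; and (b) β is a Chevalley–Eilenberg 2-cocycle of ḡ with values in V*, i.e. β([X,Y],Z) + β([Y,Z],X) + β([Z,X],Y) = 0 for all X,Y,Z ∈ ḡ. -/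
/-!
Both identities are components of the Jacobi identity of the oxidation bracket: (a) is its
`ḡ`-component on `(v, x, y)` with `v ∈ V`, `x, y ∈ ḡ`, and (b) is its `V*`-component on three
elements of `ḡ`, where the bracket restricts to `(X, Y) ↦ (⁅X, Y⁆, β X Y)`.
-/

open Module

section Oxidation

variable {R V gb : Type*} [CommRing R] [AddCommGroup V] [Module R V] [LieRing gb] [LieAlgebra R gb]
  (ν : V →ₗ[R] V →ₗ[R] gb) (τ : V →ₗ[R] V →ₗ[R] Dual R V) (f : V →ₗ[R] gb →ₗ[R] gb)
  (gm : V →ₗ[R] gb →ₗ[R] Dual R V) (β : gb →ₗ[R] gb →ₗ[R] Dual R V)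

def oxidationBracket (p q : V × gb × Dual R V) : V × gb × Dual R V :=
  (0, ν p.1 q.1 + f p.1 q.2.1 - f q.1 p.2.1 + ⁅p.2.1, q.2.1⁆,
    gm p.1 q.2.1 - gm q.1 p.2.1 + τ p.1 q.1 + β p.2.1 q.2.1)

@[simp]
lemma oxidationBracket_zero_mk_zero_mk (X Y : gb) (α γ : Dual R V) :
    oxidationBracket ν τ f gm β (0, X, α) (0, Y, γ) = (0, ⁅X, Y⁆, β X Y) := by
  simp [oxidationBracket]

@[simp]
lemma oxidationBracket_inl_zero_mk (v : V) (X : gb) (α : Dual R V) :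
    oxidationBracket ν τ f gm β (v, 0, 0) (0, X, α) = (0, f v X, gm v X) := by
  simp [oxidationBracket]

@[simp]
lemma oxidationBracket_zero_mk_inl (v : V) (X : gb) (α : Dual R V) :
    oxidationBracket ν τ f gm β (0, X, α) (v, 0, 0) = (0, -f v X, -gm v X) := by
  simp [oxidationBracket]

variable {ν τ f gm β}

lemma map_lie_of_oxidationBracket_jacobi
    (hJac : ∀ p q r, oxidationBracket ν τ f gm β (oxidationBracket ν τ f gm β p q) r +
      oxidationBracket ν τ f gm β (oxidationBracket ν τ f gm β q r) p +
      oxidationBracket ν τ f gm β (oxidationBracket ν τ f gm β r p) q = 0)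
    (v : V) (x y : gb) : f v ⁅x, y⁆ = ⁅f v x, y⁆ + ⁅x, f v y⁆ := by
  have h := congrArg (·.2.1) (hJac (v, 0, 0) (0, x, 0) (0, y, 0))
  simp only [oxidationBracket_inl_zero_mk, oxidationBracket_zero_mk_zero_mk,
    oxidationBracket_zero_mk_inl, Prod.snd_add, Prod.fst_add, Prod.snd_zero, Prod.fst_zero] at h
  rw [neg_lie, lie_skew] at h
  linear_combination (norm := module) -h

lemma cocycle_of_oxidationBracket_jacobi
    (hJac : ∀ p q r, oxidationBracket ν τ f gm β (oxidationBracket ν τ f gm β p q) r +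
      oxidationBracket ν τ f gm β (oxidationBracket ν τ f gm β q r) p +
      oxidationBracket ν τ f gm β (oxidationBracket ν τ f gm β r p) q = 0)
    (x y z : gb) : β ⁅x, y⁆ z + β ⁅y, z⁆ x + β ⁅z, x⁆ y = 0 := by
  simpa using congrArg (·.2.2) (hJac (0, x, 0) (0, y, 0) (0, z, 0))

end Oxidation

theorem stmt_14_general (V gb : Type*) [AddCommGroup V] [Module ℝ V]
    [LieRing gb] [LieAlgebra ℝ gb]
    (ν : V →ₗ[ℝ] V →ₗ[ℝ] gb)
    (τ : V →ₗ[ℝ] V →ₗ[ℝ] Module.Dual ℝ V)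
    (f : V →ₗ[ℝ] gb →ₗ[ℝ] gb)
    (gm : V →ₗ[ℝ] gb →ₗ[ℝ] Module.Dual ℝ V)
    (β : gb →ₗ[ℝ] gb →ₗ[ℝ] Module.Dual ℝ V)
    (Br : (V × gb × Module.Dual ℝ V) → (V × gb × Module.Dual ℝ V) →
      (V × gb × Module.Dual ℝ V))
    (hBr : ∀ p q, Br p q =
      ((0 : V), ν p.1 q.1 + f p.1 q.2.1 - f q.1 p.2.1 + ⁅p.2.1, q.2.1⁆,
        gm p.1 q.2.1 - gm q.1 p.2.1 + τ p.1 q.1 + β p.2.1 q.2.1))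
    (hJac : ∀ p q r, Br (Br p q) r + Br (Br q r) p + Br (Br r p) q = 0) :
    (∀ (v : V) (x y : gb), f v ⁅x, y⁆ = ⁅f v x, y⁆ + ⁅x, f v y⁆) ∧
    (∀ x y z : gb, β ⁅x, y⁆ z + β ⁅y, z⁆ x + β ⁅z, x⁆ y = 0) := by
  obtain rfl : Br = oxidationBracket ν τ f gm β := funext₂ hBr
  exact ⟨map_lie_of_oxidationBracket_jacobi hJac, cocycle_of_oxidationBracket_jacobi hJac⟩

/-- complex symplectic oxidation setup.  Given a complex symplectic Lie
algebra `(ḡ, J̄, ω̄)`, a 2-dimensional real vector space `V` with complex structure `I`,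
and the bracket on `g = V ⊕ ḡ ⊕ V*` determined by tensors `ν, τ, f, g, β`, if this
bracket satisfies the Jacobi identity then (a) each `f v` is a derivation of `ḡ`, and
(b) `β` is a Chevalley–Eilenberg 2-cocycle of `ḡ` with values in `V*`. -/
theorem stmt_14 (V gb : Type*) [AddCommGroup V] [Module ℝ V]
    [FiniteDimensional ℝ V] (hV : Module.finrank ℝ V = 2)
    (I : V →ₗ[ℝ] V) (hI : ∀ v, I (I v) = -v)
    [LieRing gb] [LieAlgebra ℝ gb] [FiniteDimensional ℝ gb]
    (Jb : gb →ₗ[ℝ] gb) (hJb : ∀ x, Jb (Jb x) = -x)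
    (hJint : ∀ x y : gb, ⁅x, y⁆ + Jb (⁅Jb x, y⁆ + ⁅x, Jb y⁆) - ⁅Jb x, Jb y⁆ = 0)
    (ωb : gb →ₗ[ℝ] gb →ₗ[ℝ] ℝ) (hωalt : ∀ x, ωb x x = 0)
    (hωcl : ∀ x y z : gb, ωb ⁅x, y⁆ z + ωb ⁅y, z⁆ x + ωb ⁅z, x⁆ y = 0)
    (hωnd : ∀ x : gb, (∀ y, ωb x y = 0) → x = 0)
    (hωsym : ∀ x y, ωb (Jb x) y = ωb x (Jb y))
    (ν : V →ₗ[ℝ] V →ₗ[ℝ] gb) (hν : ∀ v, ν v v = 0)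
    (τ : V →ₗ[ℝ] V →ₗ[ℝ] Module.Dual ℝ V) (hτ : ∀ v, τ v v = 0)
    (f : V →ₗ[ℝ] gb →ₗ[ℝ] gb)
    (gm : V →ₗ[ℝ] gb →ₗ[ℝ] Module.Dual ℝ V)
    (β : gb →ₗ[ℝ] gb →ₗ[ℝ] Module.Dual ℝ V) (hβ : ∀ x, β x x = 0)
    (Br : (V × gb × Module.Dual ℝ V) → (V × gb × Module.Dual ℝ V) →
      (V × gb × Module.Dual ℝ V))
    (hBr : ∀ p q, Br p q =
      ((0 : V), ν p.1 q.1 + f p.1 q.2.1 - f q.1 p.2.1 + ⁅p.2.1, q.2.1⁆,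
        gm p.1 q.2.1 - gm q.1 p.2.1 + τ p.1 q.1 + β p.2.1 q.2.1))
    (hJac : ∀ p q r, Br (Br p q) r + Br (Br q r) p + Br (Br r p) q = 0) :
    (∀ (v : V) (x y : gb), f v ⁅x, y⁆ = ⁅f v x, y⁆ + ⁅x, f v y⁆) ∧
    (∀ x y z : gb, β ⁅x, y⁆ z + β ⁅y, z⁆ x + β ⁅z, x⁆ y = 0) :=
  stmt_14_general V gb ν τ f gm β Br hBr hJac
end
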